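/- arXiv:1606.05097 — 3 statements merged into one kernel-verified Lean document; each statement's English description precedes it below -/
import Mathlib

section
/- Let (X,Y) be a BLM pair with parameter θ > 0, and let i, j be positive integers such that E[X^i·Y^j] and all the moments E[X^m] (1 ≤ m ≤ i) and E[Y^m] (1 ≤ m ≤ j) are finite. Then E[X^i·Y^j] = i·j·∑_{k=0}^{i−1} (1/(i−k))·C(i−1,k)·((j+k−1)!/θ^{j+k})·E[X^{i−k}] + i·j·∑_{k=0}^{j−1} (1/(j−k))·C(j−1,k)·((i+k−1)!/θ^{i+k})·E[Y^{j−k}], where C(n,k) denotes the binomial coefficient. -/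
open MeasureTheory Real Set

/-- Marginal survival function `x ↦ P(X > x)`. -/
def survival {Ω : Type*} [MeasurableSpace Ω] (μ : Measure Ω) (X : Ω → ℝ) (x : ℝ) : ℝ :=
  (μ {ω | x < X ω}).toReal

/-- Joint survival function `(x,y) ↦ P(X > x, Y > y)`. -/
def jointSurvival {Ω : Type*} [MeasurableSpace Ω] (μ : Measure Ω) (X Y : Ω → ℝ) (x y : ℝ) : ℝ :=
  (μ {ω | x < X ω ∧ y < Y ω}).toReal

/-- `(X,Y)` is a BLM pair with parameter `θ > 0`. -/
def IsBLM {Ω : Type*} [MeasurableSpace Ω] (μ : Measure Ω) (X Y : Ω → ℝ) (θ : ℝ) : Prop :=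
  0 < θ ∧ μ {ω | 0 < X ω} = 1 ∧ μ {ω | 0 < Y ω} = 1 ∧
  (∀ x y : ℝ, 0 ≤ y → y ≤ x →
    jointSurvival μ X Y x y = Real.exp (-θ * y) * survival μ X (x - y)) ∧
  (∀ x y : ℝ, 0 ≤ x → x ≤ y →
    jointSurvival μ X Y x y = Real.exp (-θ * x) * survival μ Y (y - x))

/-! By the bivariate layer-cake formula, `E[X^i Y^j] = i j ∫∫_{x,y>0} x^(i-1) y^(j-1) H̄(x,y)`.
Cut the quadrant along the diagonal and shear each half back onto the quadrant. On `{x < y}`,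
with `y = x + v`, the BLM property gives `H̄(x, x+v) = e^(-θx) Ḡ(v)`; expanding `(x+v)^(j-1)`
binomially, the `v`-integrals `∫ v^(m-1) Ḡ(v) dv` are `E[Y^m] / m` and the `x`-integrals are
Gamma integrals `(i+k-1)! / θ^(i+k)`. The half `{y ≤ x}` is the same computation for the pair
`(Y, X)`. The computation takes place in `ℝ≥0∞`, where Tonelli and the layer-cake formula hold
without integrability assumptions. -/

open scoped ENNReal

section LayerCake

variable {α : Type*} [MeasurableSpace α] (μ : Measure α) {f : α → ℝ}

theorem lintegral_pow_eq_lintegral_meas_lt_mul (f_nn : 0 ≤ᵐ[μ] f) (f_mble : AEMeasurable f μ)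
    {n : ℕ} (hn : n ≠ 0) :
    ∫⁻ ω, ENNReal.ofReal (f ω ^ n) ∂μ =
      ENNReal.ofReal n * ∫⁻ t in Ioi 0, μ {a | t < f a} * ENNReal.ofReal (t ^ (n - 1)) := by
  have hcast : (n : ℝ) - 1 = ((n - 1 : ℕ) : ℝ) := by
    rw [Nat.cast_pred (Nat.pos_of_ne_zero hn)]
  simpa only [Real.rpow_natCast, hcast] using
    lintegral_rpow_eq_lintegral_meas_lt_mul μ f_nn f_mble (p := n) (by positivity)

theorem lintegral_meas_lt_mul_pow (f_nn : 0 ≤ᵐ[μ] f) (f_mble : AEMeasurable f μ) {n : ℕ}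
    (hn : n ≠ 0) (hint : Integrable (fun ω => f ω ^ n) μ) :
    ∫⁻ t in Ioi 0, μ {a | t < f a} * ENNReal.ofReal (t ^ (n - 1)) =
      ENNReal.ofReal ((∫ ω, f ω ^ n ∂μ) / n) := by
  rw [ENNReal.ofReal_div_of_pos (by positivity), ofReal_integral_eq_lintegral_ofReal hint
      (by filter_upwards [f_nn] with ω h using pow_nonneg h n),
    lintegral_pow_eq_lintegral_meas_lt_mul μ f_nn f_mble hn, mul_comm,
    ENNReal.mul_div_cancel_right (by simpa using hn) ENNReal.ofReal_ne_top]

theorem measurable_measure_lt : Measurable fun t : ℝ => μ {a | t < f a} :=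
  Antitone.measurable fun _ _ hst => measure_mono fun _ h => hst.trans_lt h

theorem lintegral_meas_lt_mul_add_pow (f_nn : 0 ≤ᵐ[μ] f) (f_mble : AEMeasurable f μ) {n : ℕ}
    (hn : n ≠ 0) (hint : ∀ m, 1 ≤ m → m ≤ n → Integrable (fun ω => f ω ^ m) μ)
    {y : ℝ} (hy : 0 ≤ y) :
    ∫⁻ t in Ioi 0, μ {a | t < f a} * ENNReal.ofReal ((t + y) ^ (n - 1)) =
      ∑ k ∈ Finset.range n,
        ENNReal.ofReal ((n - 1).choose k * ((∫ ω, f ω ^ (n - k) ∂μ) / (n - k : ℕ))) *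
          ENNReal.ofReal (y ^ k) := by
  have hmeas : ∀ m : ℕ, Measurable fun t : ℝ => μ {a | t < f a} * ENNReal.ofReal (t ^ m) :=
    fun m => (measurable_measure_lt μ).fun_mul (by fun_prop)
  have hbinom : ∀ t ∈ Ioi (0 : ℝ), μ {a | t < f a} * ENNReal.ofReal ((t + y) ^ (n - 1)) =
      ∑ k ∈ Finset.range n, ENNReal.ofReal ((n - 1).choose k * y ^ k) *
        (μ {a | t < f a} * ENNReal.ofReal (t ^ (n - 1 - k))) := by
    intro t (ht : 0 < t)
    rw [add_comm, add_pow, Nat.sub_add_cancel (Nat.pos_of_ne_zero hn),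
      ENNReal.ofReal_sum_of_nonneg fun k _ => by positivity, Finset.mul_sum]
    refine Finset.sum_congr rfl fun k _ => ?_
    rw [show y ^ k * t ^ (n - 1 - k) * ((n - 1).choose k : ℝ) =
        (n - 1).choose k * y ^ k * t ^ (n - 1 - k) by ring, ENNReal.ofReal_mul (by positivity)]
    ring
  rw [setLIntegral_congr_fun measurableSet_Ioi hbinom,
    lintegral_finsetSum' _ fun k _ => ((hmeas _).const_mul _).aemeasurable]
  refine Finset.sum_congr rfl fun k hk => ?_
  have hk : k < n := Finset.mem_range.mp hk
  rw [lintegral_const_mul _ (hmeas _), show n - 1 - k = n - k - 1 by omega,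
    lintegral_meas_lt_mul_pow μ f_nn f_mble (by omega) (hint _ (by omega) (by omega)),
    ENNReal.ofReal_mul (by positivity), ENNReal.ofReal_mul (by positivity)]
  ring

theorem measurable_measure_lt_and_lt [SFinite μ] {g : α → ℝ} (hf : Measurable f)
    (hg : Measurable g) : Measurable fun p : ℝ × ℝ => μ {a | p.1 < f a ∧ p.2 < g a} :=
  measurable_measure_prodMk_left
    ((measurableSet_lt measurable_fst.fst (hf.comp measurable_snd)).inter
      (measurableSet_lt measurable_fst.snd (hg.comp measurable_snd)))

theorem lintegral_pow_mul_pow_eq_lintegral_meas_lt_mul [SFinite μ] {g : α → ℝ}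
    (f_nn : 0 ≤ᵐ[μ] f) (g_nn : 0 ≤ᵐ[μ] g) (hf : Measurable f) (hg : Measurable g)
    {i j : ℕ} (hi : i ≠ 0) (hj : j ≠ 0) :
    ∫⁻ ω, ENNReal.ofReal (f ω ^ i * g ω ^ j) ∂μ =
      ENNReal.ofReal i * ENNReal.ofReal j * ∫⁻ p in Ioi 0 ×ˢ Ioi 0,
        μ {a | p.1 < f a ∧ p.2 < g a} * ENNReal.ofReal (p.1 ^ (i - 1)) *
          ENNReal.ofReal (p.2 ^ (j - 1)) := by
  set w : α → ℝ≥0∞ := fun a => ENNReal.ofReal (g a ^ j)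
  have hw : Measurable w := (hg.pow_const j).ennreal_ofReal
  have hweight : ∫⁻ ω, ENNReal.ofReal (f ω ^ i * g ω ^ j) ∂μ =
      ∫⁻ ω, ENNReal.ofReal (f ω ^ i) ∂μ.withDensity w := by
    rw [lintegral_withDensity_eq_lintegral_mul _ hw (hf.pow_const i).ennreal_ofReal]
    refine lintegral_congr_ae ?_
    filter_upwards [f_nn] with a ha
    rw [Pi.mul_apply, ENNReal.ofReal_mul (pow_nonneg ha i), mul_comm]
  have hsection : ∀ t, μ.withDensity w {a | t < f a} = ENNReal.ofReal j *
      ∫⁻ s in Ioi 0, μ {a | t < f a ∧ s < g a} * ENNReal.ofReal (s ^ (j - 1)) := by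
    intro t
    rw [withDensity_apply _ (measurableSet_lt measurable_const hf),
      lintegral_pow_eq_lintegral_meas_lt_mul _ (ae_restrict_of_ae g_nn) hg.aemeasurable hj]
    congr 2 with s
    rw [Measure.restrict_apply (measurableSet_lt measurable_const hg), inter_comm]
    rfl
  rw [hweight, lintegral_pow_eq_lintegral_meas_lt_mul _
      ((withDensity_absolutelyContinuous μ w).ae_le f_nn) hf.aemeasurable hi,
    Measure.volume_eq_prod, setLIntegral_prod]
  · simp_rw [hsection, mul_assoc, lintegral_const_mul' _ _ ENNReal.ofReal_ne_top]
    congr 2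
    refine lintegral_congr fun t => ?_
    rw [← lintegral_mul_const' _ _ ENNReal.ofReal_ne_top]
    refine lintegral_congr fun s => ?_
    ring
  · exact ((measurable_measure_lt_and_lt μ hf hg).mul (by fun_prop)).mul (by fun_prop)
      |>.aemeasurable

end LayerCake

theorem setLIntegral_Ioi_prod_Ioi_eq_add (g : ℝ × ℝ → ℝ≥0∞) :
    ∫⁻ p in Ioi 0 ×ˢ Ioi 0, g p =
      (∫⁻ p in Ioi 0 ×ˢ Ioi 0, g (p.1, p.1 + p.2)) +
        ∫⁻ p in Ioi 0 ×ˢ Ioi 0, g (p.1 + p.2, p.1) := by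
  have hshear := measurePreserving_prod_add (volume : Measure ℝ) (volume : Measure ℝ)
  have hupper :
      (fun p : ℝ × ℝ => (p.1, p.1 + p.2)) ⁻¹' (Ioi 0 ×ˢ Ioi 0 ∩ {p | p.1 < p.2}) =
        Ioi 0 ×ˢ Ioi 0 := by
    ext ⟨x, v⟩
    simp only [mem_preimage, mem_inter_iff, mem_prod, mem_Ioi, mem_ofPred_eq]
    constructor
    · rintro ⟨⟨hx, -⟩, hv⟩
      exact ⟨hx, by linarith⟩
    · rintro ⟨hx, hv⟩
      exact ⟨⟨hx, by linarith⟩, by linarith⟩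
  -- the diagonal lies in the lower half, where it becomes the null set `{v = 0}`
  have hlower :
      (fun p : ℝ × ℝ => (p.1 + p.2, p.1)) ⁻¹' (Ioi 0 ×ˢ Ioi 0 \ {p | p.1 < p.2}) =
        Ioi 0 ×ˢ Ici 0 := by
    ext ⟨x, v⟩
    simp only [mem_preimage, mem_sdiff, mem_prod, mem_Ioi, mem_Ici, mem_ofPred_eq, not_lt]
    constructor
    · rintro ⟨⟨-, hx⟩, hv⟩
      exact ⟨hx, by linarith⟩
    · rintro ⟨hx, hv⟩
      exact ⟨⟨by linarith, hx⟩, by linarith⟩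
  rw [← lintegral_inter_add_sdiff g _ (measurableSet_lt measurable_fst measurable_snd),
    Measure.volume_eq_prod]
  congr 1
  · rw [← hshear.setLIntegral_comp_preimage_emb
      (MeasurableEquiv.shearAddRight ℝ).measurableEmbedding, hupper]
  · have hnull : (Ioi 0 ×ˢ Ioi 0 : Set (ℝ × ℝ)) =ᵐ[volume.prod volume] Ioi 0 ×ˢ Ici 0 :=
      Measure.set_prod_ae_eq (ae_eq_refl _) Ioi_ae_eq_Ici
    rw [setLIntegral_congr hnull, ← hlower]
    exact ((Measure.measurePreserving_swap.comp hshear).setLIntegral_comp_preimage_emb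
      ((MeasurableEquiv.shearAddRight ℝ).trans MeasurableEquiv.prodComm).measurableEmbedding
      _ _).symm

theorem lintegral_pow_mul_exp_neg_mul_Ioi {θ : ℝ} (hθ : 0 < θ) (m : ℕ) :
    ∫⁻ y in Ioi 0, ENNReal.ofReal (y ^ m * exp (-θ * y)) =
      ENNReal.ofReal (m.factorial / θ ^ (m + 1)) := by
  have hGamma : ∫ y in Ioi 0, y ^ m * exp (-θ * y) = m.factorial / θ ^ (m + 1) := by
    have h := Real.integral_rpow_mul_exp_neg_mul_Ioi (a := m + 1) (by positivity) hθ
    simp only [add_sub_cancel_right, Real.rpow_natCast, Real.Gamma_nat_eq_factorial] at h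
    rw [← Nat.cast_add_one, Real.rpow_natCast] at h
    simp only [neg_mul, h]
    ring
  rw [← ofReal_integral_eq_lintegral_ofReal, hGamma]
  · exact .of_integral_ne_zero (by rw [hGamma]; positivity)
  · filter_upwards [ae_restrict_mem measurableSet_Ioi] with y (hy : 0 < y)
    positivity

noncomputable def blmMomentSum (θ : ℝ) (a b : ℕ) (M : ℕ → ℝ) : ℝ :=
  ∑ k ∈ Finset.range a, (1 / ((a : ℝ) - (k : ℝ))) * (Nat.choose (a - 1) k : ℝ)
    * ((Nat.factorial (b + k - 1) : ℝ) / θ ^ (b + k)) * M (a - k)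

theorem blmMomentSum_nonneg {θ : ℝ} (hθ : 0 ≤ θ) (a b : ℕ) {M : ℕ → ℝ}
    (hM : ∀ m, 0 ≤ M m) : 0 ≤ blmMomentSum θ a b M := by
  refine Finset.sum_nonneg fun k hk => ?_
  have : (k : ℝ) < a := by exact_mod_cast Finset.mem_range.mp hk
  have : 0 < (a : ℝ) - k := by linarith
  have := hM (a - k)
  positivity

theorem lintegral_exp_mul_lintegral_meas_lt_eq_blmMomentSum {α : Type*} [MeasurableSpace α]
    (μ : Measure α) {f : α → ℝ} (f_nn : 0 ≤ᵐ[μ] f) (f_mble : AEMeasurable f μ) {θ : ℝ}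
    (hθ : 0 < θ) {i j : ℕ} (hi : i ≠ 0) (hj : j ≠ 0)
    (hint : ∀ m, 1 ≤ m → m ≤ j → Integrable (fun ω => f ω ^ m) μ) :
    ∫⁻ x in Ioi 0, ENNReal.ofReal (exp (-θ * x)) * ENNReal.ofReal (x ^ (i - 1)) *
        ∫⁻ v in Ioi 0, μ {a | v < f a} * ENNReal.ofReal ((v + x) ^ (j - 1)) =
      ENNReal.ofReal (blmMomentSum θ j i fun m => ∫ ω, f ω ^ m ∂μ) := by
  have hM : ∀ m, 0 ≤ ∫ ω, f ω ^ m ∂μ := fun m =>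
    integral_nonneg_of_ae (by filter_upwards [f_nn] with ω h using pow_nonneg h m)
  calc _ = ∫⁻ x in Ioi 0, ∑ k ∈ Finset.range j,
          ENNReal.ofReal ((j - 1).choose k * ((∫ ω, f ω ^ (j - k) ∂μ) / (j - k : ℕ))) *
            ENNReal.ofReal (x ^ (i + k - 1) * exp (-θ * x)) := by
        refine setLIntegral_congr_fun measurableSet_Ioi fun x (hx : 0 < x) => ?_
        rw [lintegral_meas_lt_mul_add_pow μ f_nn f_mble hj hint hx.le, Finset.mul_sum]
        refine Finset.sum_congr rfl fun k _ => ?_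
        rw [show x ^ (i + k - 1) * exp (-θ * x) = exp (-θ * x) * x ^ (i - 1) * x ^ k by
            rw [show i + k - 1 = i - 1 + k by omega, pow_add]; ring,
          ENNReal.ofReal_mul (by positivity : 0 ≤ exp (-θ * x) * x ^ (i - 1)),
          ENNReal.ofReal_mul (exp_nonneg _)]
        ring
    _ = ∑ k ∈ Finset.range j,
          ENNReal.ofReal ((j - 1).choose k * ((∫ ω, f ω ^ (j - k) ∂μ) / (j - k : ℕ)) *
            ((i + k - 1).factorial / θ ^ (i + k))) := by
        rw [lintegral_finsetSum' _ fun k _ => by fun_prop]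
        refine Finset.sum_congr rfl fun k _ => ?_
        have := hM (j - k)
        rw [lintegral_const_mul _ (by fun_prop), lintegral_pow_mul_exp_neg_mul_Ioi hθ,
          Nat.sub_add_cancel (by omega), ← ENNReal.ofReal_mul (by positivity)]
    _ = _ := by
        rw [← ENNReal.ofReal_sum_of_nonneg fun k _ => by have := hM (j - k); positivity]
        refine congrArg _ (Finset.sum_congr rfl fun k hk => ?_)
        rw [Nat.cast_sub (Finset.mem_range.mp hk).le]
        ring

namespace IsBLM

variable {Ω : Type*} [MeasurableSpace Ω] {μ : Measure Ω} {X Y : Ω → ℝ} {θ : ℝ}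

theorem symm (h : IsBLM μ X Y θ) : IsBLM μ Y X θ := by
  have hswap : ∀ x y, jointSurvival μ Y X y x = jointSurvival μ X Y x y := by
    simp only [jointSurvival, and_comm, implies_true]
  obtain ⟨hθ, hX, hY, hlower, hupper⟩ := h
  exact ⟨hθ, hY, hX, fun x y hy hyx => hswap y x ▸ hupper y x hy hyx,
    fun x y hx hxy => hswap y x ▸ hlower y x hx hxy⟩

theorem ae_pos_fst [IsProbabilityMeasure μ] (h : IsBLM μ X Y θ) (hX : Measurable X) :
    ∀ᵐ ω ∂μ, 0 < X ω :=
  (ae_iff_measure_eq (measurableSet_lt measurable_const hX).nullMeasurableSet).2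
    (by rw [h.2.1, measure_univ])

theorem measure_lt_and_add_lt [IsFiniteMeasure μ] (h : IsBLM μ X Y θ) {x v : ℝ} (hx : 0 ≤ x)
    (hv : 0 ≤ v) :
    μ {ω | x < X ω ∧ x + v < Y ω} = ENNReal.ofReal (exp (-θ * x)) * μ {ω | v < Y ω} := by
  have := h.2.2.2.2 x (x + v) hx (by linarith)
  rw [jointSurvival, survival, add_sub_cancel_left] at this
  rw [← ENNReal.ofReal_toReal (measure_ne_top μ _), this, ENNReal.ofReal_mul (exp_nonneg _),
    ENNReal.ofReal_toReal (measure_ne_top μ _)]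

theorem setLIntegral_meas_lt_and_add_lt [IsProbabilityMeasure μ] (h : IsBLM μ X Y θ)
    (hY : Measurable Y) {i j : ℕ} (hi : i ≠ 0) (hj : j ≠ 0)
    (hYm : ∀ m, 1 ≤ m → m ≤ j → Integrable (fun ω => Y ω ^ m) μ) :
    ∫⁻ p in Ioi 0 ×ˢ Ioi 0, μ {ω | p.1 < X ω ∧ p.1 + p.2 < Y ω} *
        ENNReal.ofReal (p.1 ^ (i - 1)) * ENNReal.ofReal ((p.1 + p.2) ^ (j - 1)) =
      ENNReal.ofReal (blmMomentSum θ j i fun m => ∫ ω, Y ω ^ m ∂μ) := by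
  have hYnn : 0 ≤ᵐ[μ] Y := h.symm.ae_pos_fst hY |>.mono fun _ h => h.le
  calc _ = ∫⁻ p in Ioi 0 ×ˢ Ioi 0,
        ENNReal.ofReal (exp (-θ * p.1)) * ENNReal.ofReal (p.1 ^ (i - 1)) *
          (μ {ω | p.2 < Y ω} * ENNReal.ofReal ((p.2 + p.1) ^ (j - 1))) := by
        refine setLIntegral_congr_fun (measurableSet_Ioi.prod measurableSet_Ioi) fun p hp => ?_
        rw [h.measure_lt_and_add_lt hp.1.le hp.2.le, add_comm p.1 p.2]
        ring
    _ = ∫⁻ x in Ioi 0, ENNReal.ofReal (exp (-θ * x)) * ENNReal.ofReal (x ^ (i - 1)) *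
          ∫⁻ v in Ioi 0, μ {ω | v < Y ω} * ENNReal.ofReal ((v + x) ^ (j - 1)) := by
        have hF : Measurable fun p : ℝ × ℝ => μ {ω | p.2 < Y ω} :=
          (measurable_measure_lt μ).comp measurable_snd
        have hG : Measurable fun p : ℝ × ℝ =>
            ENNReal.ofReal (exp (-θ * p.1)) * ENNReal.ofReal (p.1 ^ (i - 1)) := by fun_prop
        rw [Measure.volume_eq_prod,
          setLIntegral_prod _ (hG.fun_mul (hF.fun_mul (by fun_prop))).aemeasurable]
        simp_rw [lintegral_const_mul' _ _
          (ENNReal.mul_ne_top ENNReal.ofReal_ne_top ENNReal.ofReal_ne_top)]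
    _ = _ :=
        lintegral_exp_mul_lintegral_meas_lt_eq_blmMomentSum μ hYnn hY.aemeasurable h.1 hi hj hYm

end IsBLM

theorem blm_product_moments_general {Ω : Type*} [MeasurableSpace Ω] (μ : Measure Ω)
    [IsProbabilityMeasure μ] (X Y : Ω → ℝ) (hX : Measurable X) (hY : Measurable Y)
    (θ : ℝ) (hBLM : IsBLM μ X Y θ) (i j : ℕ) (hi : 1 ≤ i) (hj : 1 ≤ j)
    (hXm : ∀ m : ℕ, 1 ≤ m → m ≤ i → Integrable (fun ω => X ω ^ m) μ)
    (hYm : ∀ m : ℕ, 1 ≤ m → m ≤ j → Integrable (fun ω => Y ω ^ m) μ) :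
    ∫ ω, X ω ^ i * Y ω ^ j ∂μ =
      (i : ℝ) * (j : ℝ) * ∑ k ∈ Finset.range i,
          (1 / ((i : ℝ) - (k : ℝ))) * (Nat.choose (i - 1) k : ℝ)
            * ((Nat.factorial (j + k - 1) : ℝ) / θ ^ (j + k))
            * ∫ ω, X ω ^ (i - k) ∂μ
        + (i : ℝ) * (j : ℝ) * ∑ k ∈ Finset.range j,
            (1 / ((j : ℝ) - (k : ℝ))) * (Nat.choose (j - 1) k : ℝ)
              * ((Nat.factorial (i + k - 1) : ℝ) / θ ^ (i + k))
              * ∫ ω, Y ω ^ (j - k) ∂μ := by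
  have hXpos := hBLM.ae_pos_fst hX
  have hYpos := hBLM.symm.ae_pos_fst hY
  have hSX := blmMomentSum_nonneg hBLM.1.le i j fun m =>
    integral_nonneg_of_ae (by filter_upwards [hXpos] with ω h using pow_nonneg h.le m)
  have hSY := blmMomentSum_nonneg hBLM.1.le j i fun m =>
    integral_nonneg_of_ae (by filter_upwards [hYpos] with ω h using pow_nonneg h.le m)
  have hlower : ∫⁻ p in Ioi 0 ×ˢ Ioi 0, μ {ω | p.1 + p.2 < X ω ∧ p.1 < Y ω} *
      ENNReal.ofReal ((p.1 + p.2) ^ (i - 1)) * ENNReal.ofReal (p.1 ^ (j - 1)) =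
      ENNReal.ofReal (blmMomentSum θ i j fun m => ∫ ω, X ω ^ m ∂μ) := by
    rw [← hBLM.symm.setLIntegral_meas_lt_and_add_lt hX (by omega) (by omega) hXm]
    refine setLIntegral_congr_fun (measurableSet_Ioi.prod measurableSet_Ioi) fun p _ => ?_
    simp only [and_comm]
    ring
  rw [integral_eq_lintegral_of_nonneg_ae
      (by filter_upwards [hXpos, hYpos] with ω hx hy using by positivity)
      ((hX.pow_const i).fun_mul (hY.pow_const j)).aestronglyMeasurable,
    lintegral_pow_mul_pow_eq_lintegral_meas_lt_mul μ (hXpos.mono fun _ h => h.le)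
      (hYpos.mono fun _ h => h.le) hX hY (by omega) (by omega),
    setLIntegral_Ioi_prod_Ioi_eq_add,
    hBLM.setLIntegral_meas_lt_and_add_lt hY (by omega) (by omega) hYm, hlower,
    ← ENNReal.ofReal_add hSY hSX, ENNReal.toReal_mul, ENNReal.toReal_mul,
    ENNReal.toReal_ofReal (add_nonneg hSY hSX), ENNReal.toReal_ofReal (Nat.cast_nonneg _),
    ENNReal.toReal_ofReal (Nat.cast_nonneg _)]
  simp only [blmMomentSum]
  ring

theorem blm_product_moments {Ω : Type*} [MeasurableSpace Ω] (μ : Measure Ω)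
    [IsProbabilityMeasure μ] (X Y : Ω → ℝ) (hX : Measurable X) (hY : Measurable Y)
    (θ : ℝ) (hBLM : IsBLM μ X Y θ) (i j : ℕ) (hi : 1 ≤ i) (hj : 1 ≤ j)
    (hXY : Integrable (fun ω => X ω ^ i * Y ω ^ j) μ)
    (hXm : ∀ m : ℕ, 1 ≤ m → m ≤ i → Integrable (fun ω => X ω ^ m) μ)
    (hYm : ∀ m : ℕ, 1 ≤ m → m ≤ j → Integrable (fun ω => Y ω ^ m) μ) :
    ∫ ω, X ω ^ i * Y ω ^ j ∂μ =
      (i : ℝ) * (j : ℝ) * ∑ k ∈ Finset.range i,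
          (1 / ((i : ℝ) - (k : ℝ))) * (Nat.choose (i - 1) k : ℝ)
            * ((Nat.factorial (j + k - 1) : ℝ) / θ ^ (j + k))
            * ∫ ω, X ω ^ (i - k) ∂μ
        + (i : ℝ) * (j : ℝ) * ∑ k ∈ Finset.range j,
            (1 / ((j : ℝ) - (k : ℝ))) * (Nat.choose (j - 1) k : ℝ)
              * ((Nat.factorial (i + k - 1) : ℝ) / θ ^ (i + k))
              * ∫ ω, Y ω ^ (j - k) ∂μ :=
  blm_product_moments_general μ X Y hX hY θ hBLM i j hi hj hXm hYm
end

section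
/- Let (X,Y) be a BLM pair with parameter θ > 0 and joint survival function H̄, and assume the marginal survival functions F̄, Ḡ are strictly positive on [0,∞). Then H̄ is TP₂ on (0,∞)×(0,∞) if and only if both marginals are IFR (i.e., x ↦ −log F̄(x) and x ↦ −log Ḡ(x) are convex on [0,∞)) and F̄(x)·Ḡ(x) ≤ e^{−θx} for all x ≥ 0. -/
open MeasureTheory Real Set

/-- `K` is totally positive of order two on `S × T`. -/
def TP2 (K : ℝ → ℝ → ℝ) (S T : Set ℝ) : Prop :=
  ∀ x₁ ∈ S, ∀ x₂ ∈ S, ∀ y₁ ∈ T, ∀ y₂ ∈ T, x₁ < x₂ → y₁ < y₂ →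
    K x₁ y₂ * K x₂ y₁ ≤ K x₁ y₁ * K x₂ y₂

/-
Write `φ = -log F̄` and `ψ = -log Ḡ`. The BLM form of `H̄` gives, for `x, y > 0`,
`-log H̄(x, y) = θ (x + y) / 2 + κ (x - y)` with `κ t = φ t - θ t / 2` for `t ≥ 0` and
`κ t = ψ (-t) + θ t / 2` for `t ≤ 0`, because `θ min(x, y) = θ (x + y) / 2 - θ |x - y| / 2`.
The separable part does not affect total positivity, and a kernel `exp (-κ (x - y))` is TP₂
exactly when `κ` is Wright convex on `ℝ`: `κ b + κ c ≤ κ a + κ d` whenever `a ≤ b, c` and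
`b + c = a + d`. Wright convexity of `κ` is equivalent to Wright convexity of `φ` and `ψ` on
`[0, ∞)` (the linear terms cancel) together with `κ t + κ (-t) ≥ 2 κ 0`, i.e.
`φ t + ψ t ≥ θ t`, i.e. `F̄ t Ḡ t ≤ exp (-θ t)`. Finally, `φ` and `ψ` are nondecreasing, and a
nondecreasing Wright convex function is convex: Wright convexity gives the chord inequality at
rational points, and monotonicity extends it to all points.
-/

open Filter Topology

theorem mul_sum_range_le_of_monotoneOn {d : ℕ → ℝ} {p q : ℕ} (hpq : p ≤ q)
    (hd : MonotoneOn d (Iio q)) :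
    (q : ℝ) * ∑ i ∈ Finset.range p, d i ≤ p * ∑ i ∈ Finset.range q, d i := by
  induction q, hpq using Nat.le_induction with
  | base => rfl
  | succ q hpq ih =>
    have hprefix : ∑ i ∈ Finset.range p, d i ≤ p * d q := by
      have hi_le : ∀ i ∈ Finset.range p, i ≤ q := fun i hi => (Finset.mem_range.1 hi).le.trans hpq
      simpa using Finset.sum_le_sum fun i hi =>
        hd (mem_Iio.2 (Nat.lt_succ_of_le (hi_le i hi))) (mem_Iio.2 q.lt_succ_self) (hi_le i hi)
    have := ih (hd.mono fun i hi => by simp at hi ⊢; omega)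
    rw [Finset.sum_range_succ]
    push_cast
    linarith

def WrightConvexOn (s : Set ℝ) (f : ℝ → ℝ) : Prop :=
  ∀ ⦃a b c d⦄, a ∈ s → b ∈ s → c ∈ s → d ∈ s → a ≤ b → a ≤ c → b + c = a + d →
    f b + f c ≤ f a + f d

namespace WrightConvexOn

variable {s : Set ℝ} {f : ℝ → ℝ}

theorem mono {t : Set ℝ} (hf : WrightConvexOn s f) (hts : t ⊆ s) : WrightConvexOn t f :=
  fun _ _ _ _ ha hb hc hd => hf (hts ha) (hts hb) (hts hc) (hts hd)

theorem congr {g : ℝ → ℝ} (hf : WrightConvexOn s f) (hfg : EqOn f g s) : WrightConvexOn s g := by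
  intro a b c d ha hb hc hd hab hac hsum
  rw [← hfg ha, ← hfg hb, ← hfg hc, ← hfg hd]
  exact hf ha hb hc hd hab hac hsum

theorem add_mul (hf : WrightConvexOn s f) (m : ℝ) : WrightConvexOn s fun t => f t + m * t := by
  intro a b c d ha hb hc hd hab hac hsum
  have := hf ha hb hc hd hab hac hsum
  linear_combination this + m * hsum

theorem comp_neg (hf : WrightConvexOn s f) : WrightConvexOn (-s) fun t => f (-t) := by
  intro a b c d ha hb hc hd hab hac hsum
  have := hf hd hc hb ha (by linarith) (by linarith) (by linarith)
  linarith

theorem natCast_mul_sub_le (hs : s.OrdConnected) (hf : WrightConvexOn s f) {x z : ℝ}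
    (hx : x ∈ s) (hz : z ∈ s) (hxz : x ≤ z) {p n : ℕ} (hpn : p ≤ n) :
    (n : ℝ) * (f (x + p / n * (z - x)) - f x) ≤ p * (f z - f x) := by
  rcases n.eq_zero_or_pos with rfl | hn
  · simp [Nat.le_zero.1 hpn]
  have hn' : (0 : ℝ) < n := Nat.cast_pos.2 hn
  set h := (z - x) / n
  have hh : 0 ≤ h := div_nonneg (by linarith) hn'.le
  have hnh : n * h = z - x := by simp only [h]; field_simp
  set g : ℕ → ℝ := fun k => f (x + k * h)
  have hmem : ∀ k : ℕ, k ≤ n → x + k * h ∈ s := by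
    intro k hk
    have : (k : ℝ) * h ≤ n * h := mul_le_mul_of_nonneg_right (Nat.cast_le.2 hk) hh
    exact hs.out hx hz ⟨le_add_of_nonneg_right (by positivity), by linarith⟩
  have hmono : MonotoneOn (fun i => g (i + 1) - g i) (Iio n) := by
    intro i hi j hj hij
    have := hf (hmem i (by simp at hi; omega)) (hmem (i + 1) (by simp at hi; omega))
      (hmem j (by simp at hj; omega)) (hmem (j + 1) (by simp at hj; omega))
      (by push_cast; linarith) (by gcongr) (by push_cast; ring)
    simp only [g]
    linarith
  have key := mul_sum_range_le_of_monotoneOn hpn hmono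
  rw [Finset.sum_range_sub, Finset.sum_range_sub] at key
  have hgn : g n = f z := by simp only [g]; rw [hnh]; ring_nf
  have hgp : g p = f (x + p / n * (z - x)) := by simp only [g, h]; ring_nf
  have hg0 : g 0 = f x := by simp [g]
  rwa [hgn, hgp, hg0] at key

theorem convexOn_of_monotoneOn (hs : s.OrdConnected) (hf : WrightConvexOn s f)
    (hmono : MonotoneOn f s) : ConvexOn ℝ s f := by
  refine convexOn_of_slope_mono_adjacent hs.convex fun {x y z} hx hz hxy hyz => ?_
  have hy : y ∈ s := hs.out hx hz ⟨hxy.le, hyz.le⟩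
  have hzx : 0 < z - x := by linarith
  set r := (y - x) / (z - x)
  have hr : 0 ≤ r := div_nonneg (by linarith) hzx.le
  have hr1 : r ≤ 1 := (div_le_one hzx).2 (by linarith)
  -- `y` lies below the grid point `x + ⌈r n⌉₊ / n * (z - x)`, where the chord inequality holds
  have hbound : ∀ n : ℕ, 1 ≤ n → f y - f x ≤ (⌈r * n⌉₊ / n : ℝ) * (f z - f x) := by
    intro n hn
    have hn' : (0 : ℝ) < n := by exact_mod_cast hn
    set p := ⌈r * n⌉₊
    have hpn : p ≤ n := Nat.ceil_le.2 (by nlinarith)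
    have hrp : r ≤ p / n := (le_div_iff₀ hn').2 (Nat.le_ceil _)
    have hyp : y ≤ x + p / n * (z - x) := by
      have := mul_le_mul_of_nonneg_right hrp hzx.le
      rw [div_mul_cancel₀ _ hzx.ne'] at this
      linarith
    have hp1 : (p / n : ℝ) ≤ 1 := (div_le_one hn').2 (Nat.cast_le.2 hpn)
    have hmem : x + p / n * (z - x) ∈ s :=
      hs.out hx hz ⟨by nlinarith, by nlinarith⟩
    have hchord := hf.natCast_mul_sub_le hs hx hz (hxy.trans hyz).le hpn
    have hfy := hmono hy hmem hyp
    rw [div_mul_eq_mul_div, le_div_iff₀ hn']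
    nlinarith
  have hlim : Tendsto (fun n : ℕ => (⌈r * n⌉₊ / n : ℝ) * (f z - f x)) atTop
      (𝓝 (r * (f z - f x))) :=
    ((tendsto_nat_ceil_mul_div_atTop hr).comp tendsto_natCast_atTop_atTop).mul_const _
  have hle : f y - f x ≤ r * (f z - f x) := ge_of_tendsto hlim (eventually_atTop.2 ⟨1, hbound⟩)
  rw [div_mul_eq_mul_div, le_div_iff₀ hzx] at hle
  rw [div_le_div_iff₀ (sub_pos.2 hxy) (sub_pos.2 hyz)]
  linear_combination hle

end WrightConvexOn

theorem wrightConvexOn_add_mul_iff {s : Set ℝ} {f : ℝ → ℝ} (m : ℝ) :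
    WrightConvexOn s (fun t => f t + m * t) ↔ WrightConvexOn s f :=
  ⟨fun h => by simpa using h.add_mul (-m), fun h => h.add_mul m⟩

theorem ConvexOn.wrightConvexOn {s : Set ℝ} {f : ℝ → ℝ} (hf : ConvexOn ℝ s f) :
    WrightConvexOn s f := by
  intro a b c d ha hb hc hd hab hac hsum
  obtain rfl | had := (show a ≤ d by linarith).eq_or_lt
  · obtain rfl : b = a := by linarith
    obtain rfl : c = b := by linarith
    rfl
  have hda : d - a ≠ 0 := by linarith
  set t := (d - b) / (d - a)
  have ht0 : 0 ≤ t := div_nonneg (by linarith) (by linarith)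
  have ht1 : 0 ≤ 1 - t := by
    rw [sub_nonneg, div_le_one (by linarith)]; linarith
  have hb' : t • a + (1 - t) • d = b := by
    simp only [t, smul_eq_mul]; field_simp; ring
  have hc' : (1 - t) • a + t • d = c := by
    simp only [t, smul_eq_mul]; field_simp; linear_combination (a - d) * hsum
  have h₁ := hf.2 ha hd ht0 ht1 (by ring)
  have h₂ := hf.2 ha hd ht1 ht0 (by ring)
  rw [hb'] at h₁
  rw [hc'] at h₂
  simp only [smul_eq_mul] at h₁ h₂
  linarith

theorem wrightConvexOn_iff_convexOn_of_monotoneOn {s : Set ℝ} {f : ℝ → ℝ}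
    (hs : s.OrdConnected) (hmono : MonotoneOn f s) : WrightConvexOn s f ↔ ConvexOn ℝ s f :=
  ⟨fun hf => hf.convexOn_of_monotoneOn hs hmono, ConvexOn.wrightConvexOn⟩

section Gluing

variable {κ : ℝ → ℝ}

theorem glued_add_le_of_nonpos_of_nonneg (hpos : WrightConvexOn (Ici 0) κ)
    (hneg : WrightConvexOn (Ici 0) fun t => κ (-t))
    (hcross : ∀ t, 0 ≤ t → 2 * κ 0 ≤ κ t + κ (-t)) {a b c d : ℝ}
    (hab : a ≤ b) (hb : b ≤ 0) (hc : 0 ≤ c) (hsum : b + c = a + d) :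
    κ b + κ c ≤ κ a + κ d := by
  have hleft : κ b + κ (a - b) ≤ κ a + κ 0 := by
    have := hneg (a := 0) (b := -b) (c := b - a) (d := -a) self_mem_Ici (by simpa using hb)
      (by simpa using hab) (by simp; linarith) (by linarith) (by linarith) (by ring)
    simp only [neg_neg, neg_sub, neg_zero] at this
    linarith
  have hright : κ (b - a) + κ c ≤ κ 0 + κ d :=
    hpos self_mem_Ici (by simpa using hab) hc (by simp; linarith) (by linarith) hc (by linarith)
  have := hcross (b - a) (by linarith)
  rw [neg_sub] at this
  linarith

theorem glued_add_le_of_nonneg (hpos : WrightConvexOn (Ici 0) κ)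
    (hneg : WrightConvexOn (Ici 0) fun t => κ (-t))
    (hcross : ∀ t, 0 ≤ t → 2 * κ 0 ≤ κ t + κ (-t)) {a b c d : ℝ}
    (hab : a ≤ b) (hac : a ≤ c) (hb : 0 ≤ b) (hc : 0 ≤ c) (hsum : b + c = a + d) :
    κ b + κ c ≤ κ a + κ d := by
  rcases le_or_gt 0 a with ha | ha
  · exact hpos ha hb hc (by simp; linarith) hab hac hsum
  have hsplit : κ b + κ c ≤ κ 0 + κ (b + c) :=
    hpos self_mem_Ici hb hc (by simp; linarith) hb hc (by ring)
  have := glued_add_le_of_nonpos_of_nonneg hpos hneg hcross ha.le le_rfl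
    (add_nonneg hb hc) (d := d) (by linarith)
  linarith

theorem wrightConvexOn_univ_iff :
    WrightConvexOn univ κ ↔ WrightConvexOn (Ici 0) κ ∧ WrightConvexOn (Ici 0) (fun t => κ (-t)) ∧
      ∀ t, 0 ≤ t → 2 * κ 0 ≤ κ t + κ (-t) := by
  refine ⟨fun h => ⟨h.mono (subset_univ _), ?_, fun t ht => ?_⟩, fun ⟨hpos, hneg, hcross⟩ => ?_⟩
  · exact (h.comp_neg.mono (by simp))
  · have := h (mem_univ (-t)) (mem_univ 0) (mem_univ 0) (mem_univ t) (by linarith) (by linarith)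
      (by ring)
    linarith
  have hcross' : ∀ t, 0 ≤ t → 2 * κ (-0) ≤ κ (-t) + κ (-(-t)) := fun t ht => by
    simpa [add_comm] using hcross t ht
  intro a b c d _ _ _ _ hab hac hsum
  rcases le_total 0 b with hb | hb <;> rcases le_total 0 c with hc | hc
  · exact glued_add_le_of_nonneg hpos hneg hcross hab hac hb hc hsum
  · simpa [add_comm] using glued_add_le_of_nonpos_of_nonneg hpos hneg hcross hac hc hb
      (by linarith : c + b = a + d)
  · exact glued_add_le_of_nonpos_of_nonneg hpos hneg hcross hab hb hc hsum
  · have := glued_add_le_of_nonneg hneg (by simpa using hpos) hcross' (a := -d) (b := -b) (c := -c)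
      (d := -a) (by linarith) (by linarith) (by linarith) (by linarith) (by linarith)
    simpa [add_comm] using this

end Gluing

theorem tp2_Ioi_iff_wrightConvexOn {K : ℝ → ℝ → ℝ} {u v κ : ℝ → ℝ}
    (hK : ∀ x, 0 < x → ∀ y, 0 < y → K x y = exp (u x + v y - κ (x - y))) :
    TP2 K (Ioi 0) (Ioi 0) ↔ WrightConvexOn univ κ := by
  have hK₂ : ∀ {x₁ x₂ y₁ y₂ : ℝ}, 0 < x₁ → 0 < x₂ → 0 < y₁ → 0 < y₂ →
      (K x₁ y₂ * K x₂ y₁ ≤ K x₁ y₁ * K x₂ y₂ ↔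
        κ (x₁ - y₁) + κ (x₂ - y₂) ≤ κ (x₁ - y₂) + κ (x₂ - y₁)) := by
    intro x₁ x₂ y₁ y₂ hx₁ hx₂ hy₁ hy₂
    rw [hK x₁ hx₁ y₂ hy₂, hK x₂ hx₂ y₁ hy₁, hK x₁ hx₁ y₁ hy₁, hK x₂ hx₂ y₂ hy₂, ← exp_add,
      ← exp_add, exp_le_exp]
    constructor <;> intro h <;> linarith
  constructor
  · intro hT a b c d _ _ _ _ hab hac hsum
    obtain rfl | hab := hab.eq_or_lt
    · obtain rfl : c = d := by linarith
      rfl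
    obtain rfl | hac := hac.eq_or_lt
    · obtain rfl : b = d := by linarith
      exact (add_comm _ _).le
    -- realise `a, b, c, d` as `x₁ - y₂, x₁ - y₁, x₂ - y₂, x₂ - y₁` with positive coordinates
    obtain ⟨M, hM⟩ := exists_gt (|a| + |b| + |c|)
    have := abs_nonneg a; have := abs_nonneg b; have := abs_nonneg c
    have ha := neg_abs_le a
    have hb := le_abs_self b
    have hc := neg_abs_le c
    have := (hK₂ (x₁ := a + M) (x₂ := c + M) (y₁ := a - b + M) (y₂ := M) (by linarith)
      (by linarith) (by linarith) (by linarith)).1 (hT _ (by simp; linarith) _ (by simp; linarith)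
        _ (by simp; linarith) _ (by simp; linarith) (by linarith) (by linarith))
    rwa [show a + M - (a - b + M) = b by ring, show c + M - M = c by ring,
      show a + M - M = a by ring, show c + M - (a - b + M) = d by linarith] at this
  · intro hW x₁ hx₁ x₂ hx₂ y₁ hy₁ y₂ hy₂ hx hy
    rw [hK₂ hx₁ hx₂ hy₁ hy₂]
    exact hW (mem_univ _) (mem_univ _) (mem_univ _) (mem_univ _) (by linarith) (by linarith)
      (by ring)

-- `-log H̄(x, y) = θ (x + y) / 2 + blmProfile θ φ ψ (x - y)` for the cumulative hazards `φ, ψ`.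
noncomputable def blmProfile (θ : ℝ) (φ ψ : ℝ → ℝ) (t : ℝ) : ℝ :=
  if 0 ≤ t then φ t - θ / 2 * t else ψ (-t) + θ / 2 * t

section blmProfile

variable {θ : ℝ} {φ ψ : ℝ → ℝ}

theorem blmProfile_of_nonneg {t : ℝ} (ht : 0 ≤ t) : blmProfile θ φ ψ t = φ t - θ / 2 * t :=
  if_pos ht

theorem blmProfile_of_neg {t : ℝ} (ht : t < 0) : blmProfile θ φ ψ t = ψ (-t) + θ / 2 * t :=
  if_neg ht.not_ge

theorem blmProfile_neg (h0 : φ 0 = ψ 0) (t : ℝ) : blmProfile θ φ ψ (-t) = blmProfile θ ψ φ t := by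
  rcases lt_trichotomy t 0 with ht | rfl | ht
  · rw [blmProfile_of_nonneg (by linarith), blmProfile_of_neg ht]; ring
  · simp [blmProfile, h0]
  · rw [blmProfile_of_neg (by linarith), blmProfile_of_nonneg ht.le, neg_neg]; ring

theorem wrightConvexOn_Ici_blmProfile_iff :
    WrightConvexOn (Ici 0) (blmProfile θ φ ψ) ↔ WrightConvexOn (Ici 0) φ := by
  have hEq : EqOn (fun t => φ t + -(θ / 2) * t) (blmProfile θ φ ψ) (Ici 0) := fun t ht => by
    rw [blmProfile_of_nonneg ht]; ring
  rw [← wrightConvexOn_add_mul_iff (f := φ) (-(θ / 2))]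
  exact ⟨fun h => h.congr hEq.symm, fun h => h.congr hEq⟩

theorem wrightConvexOn_univ_blmProfile_iff (hφ : φ 0 = 0) (hψ : ψ 0 = 0) :
    WrightConvexOn univ (blmProfile θ φ ψ) ↔
      WrightConvexOn (Ici 0) φ ∧ WrightConvexOn (Ici 0) ψ ∧ ∀ t, 0 ≤ t → θ * t ≤ φ t + ψ t := by
  have hneg := blmProfile_neg (θ := θ) (hφ.trans hψ.symm)
  have hcross : ∀ t, 0 ≤ t →
      (2 * blmProfile θ φ ψ 0 ≤ blmProfile θ φ ψ t + blmProfile θ ψ φ t ↔ θ * t ≤ φ t + ψ t) :=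
    fun t ht => by
      rw [blmProfile_of_nonneg ht, blmProfile_of_nonneg ht, blmProfile_of_nonneg le_rfl, hφ]
      constructor <;> intro h <;> linarith
  simp only [wrightConvexOn_univ_iff, hneg, wrightConvexOn_Ici_blmProfile_iff]
  exact and_congr_right' (and_congr_right' (forall₂_congr hcross))

end blmProfile

noncomputable def cumHazard {Ω : Type*} [MeasurableSpace Ω] (μ : Measure Ω) (X : Ω → ℝ)
    (x : ℝ) : ℝ :=
  -log (survival μ X x)

section Survival

variable {Ω : Type*} [MeasurableSpace Ω] {μ : Measure Ω} {X Y : Ω → ℝ} {θ : ℝ}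

theorem survival_antitone [IsFiniteMeasure μ] : Antitone (survival μ X) := fun _ _ hab =>
  ENNReal.toReal_mono (measure_ne_top μ _) (measure_mono fun _ hω => hab.trans_lt hω)

theorem monotoneOn_cumHazard [IsFiniteMeasure μ] (hpos : ∀ x, 0 ≤ x → 0 < survival μ X x) :
    MonotoneOn (cumHazard μ X) (Ici 0) := fun _ ha _ _ hab =>
  neg_le_neg (log_le_log (hpos _ ((mem_Ici.1 ha).trans hab)) (survival_antitone hab))

theorem exp_neg_cumHazard {x : ℝ} (h : 0 < survival μ X x) :
    exp (-cumHazard μ X x) = survival μ X x := by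
  rw [cumHazard, neg_neg, exp_log h]

namespace IsBLM

theorem cumHazard_fst_zero (hBLM : IsBLM μ X Y θ) : cumHazard μ X 0 = 0 := by
  simp [cumHazard, survival, hBLM.2.1]

theorem cumHazard_snd_zero (hBLM : IsBLM μ X Y θ) : cumHazard μ Y 0 = 0 := by
  simp [cumHazard, survival, hBLM.2.2.1]

theorem jointSurvival_eq_exp (hBLM : IsBLM μ X Y θ) (hFpos : ∀ x, 0 ≤ x → 0 < survival μ X x)
    (hGpos : ∀ x, 0 ≤ x → 0 < survival μ Y x) (x : ℝ) (hx : 0 < x) (y : ℝ) (hy : 0 < y) :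
    jointSurvival μ X Y x y = exp (-(θ / 2) * x + -(θ / 2) * y -
      blmProfile θ (cumHazard μ X) (cumHazard μ Y) (x - y)) := by
  obtain ⟨-, -, -, hXY, hYX⟩ := hBLM
  rcases le_or_gt y x with hyx | hxy
  · rw [hXY x y hy.le hyx, blmProfile_of_nonneg (by linarith),
      ← exp_neg_cumHazard (hFpos _ (by linarith)), ← exp_add]
    ring_nf
  · rw [hYX x y hx.le hxy.le, blmProfile_of_neg (by linarith), neg_sub,
      ← exp_neg_cumHazard (hGpos _ (by linarith)), ← exp_add]
    ring_nf

end IsBLM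

end Survival

theorem mul_le_exp_neg_iff {a b c : ℝ} (ha : 0 < a) (hb : 0 < b) :
    a * b ≤ exp (-c) ↔ c ≤ -log a + -log b := by
  rw [← log_le_iff_le_exp (mul_pos ha hb), log_mul ha.ne' hb.ne']
  constructor <;> intro h <;> linarith

theorem blm_survival_tp2_iff_general {Ω : Type*} [MeasurableSpace Ω] (μ : Measure Ω)
    [IsProbabilityMeasure μ] (X Y : Ω → ℝ)
    (θ : ℝ) (hBLM : IsBLM μ X Y θ)
    (hFpos : ∀ x : ℝ, 0 ≤ x → 0 < survival μ X x)
    (hGpos : ∀ x : ℝ, 0 ≤ x → 0 < survival μ Y x) :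
    TP2 (jointSurvival μ X Y) (Ioi 0) (Ioi 0) ↔
      (ConvexOn ℝ (Ici 0) (fun x => -Real.log (survival μ X x)) ∧
        ConvexOn ℝ (Ici 0) (fun x => -Real.log (survival μ Y x)) ∧
        ∀ x : ℝ, 0 ≤ x → survival μ X x * survival μ Y x ≤ Real.exp (-θ * x)) := by
  rw [tp2_Ioi_iff_wrightConvexOn (hBLM.jointSurvival_eq_exp hFpos hGpos),
    wrightConvexOn_univ_blmProfile_iff hBLM.cumHazard_fst_zero hBLM.cumHazard_snd_zero,
    wrightConvexOn_iff_convexOn_of_monotoneOn ordConnected_Ici (monotoneOn_cumHazard hFpos),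
    wrightConvexOn_iff_convexOn_of_monotoneOn ordConnected_Ici (monotoneOn_cumHazard hGpos)]
  refine and_congr Iff.rfl (and_congr Iff.rfl (forall₂_congr fun t ht => ?_))
  rw [neg_mul, mul_le_exp_neg_iff (hFpos t ht) (hGpos t ht)]
  rfl

theorem blm_survival_tp2_iff {Ω : Type*} [MeasurableSpace Ω] (μ : Measure Ω)
    [IsProbabilityMeasure μ] (X Y : Ω → ℝ) (hX : Measurable X) (hY : Measurable Y)
    (θ : ℝ) (hBLM : IsBLM μ X Y θ)
    (hFpos : ∀ x : ℝ, 0 ≤ x → 0 < survival μ X x)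
    (hGpos : ∀ x : ℝ, 0 ≤ x → 0 < survival μ Y x) :
    TP2 (jointSurvival μ X Y) (Ioi 0) (Ioi 0) ↔
      (ConvexOn ℝ (Ici 0) (fun x => -Real.log (survival μ X x)) ∧
        ConvexOn ℝ (Ici 0) (fun x => -Real.log (survival μ Y x)) ∧
        ∀ x : ℝ, 0 ≤ x → survival μ X x * survival μ Y x ≤ Real.exp (-θ * x)) :=
  blm_survival_tp2_iff_general μ X Y θ hBLM hFpos hGpos
end

section
/- Let λ₀, λ₁₂ > 0 and set λ = 2λ₀ + λ₁₂. Then the Block–Basu bivariate exponential density with equal parameters λ₁ = λ₂ = λ₀, namely h(x,y) = (λ(λ₀+λ₁₂)/2)·exp(−(λ₀+λ₁₂)x − λ₀y) for x ≥ y > 0 and h(x,y) = (λ(λ₀+λ₁₂)/2)·exp(−λ₀x − (λ₀+λ₁₂)y) for y > x > 0, is TP_∞ on (0,∞)×(0,∞). -/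
open Real Set

/-- `K` is totally positive of all orders (TP_∞) on `S × T`. -/
def TPinf (K : ℝ → ℝ → ℝ) (S T : Set ℝ) : Prop :=
  ∀ s : ℕ, 2 ≤ s → ∀ x y : Fin s → ℝ, StrictMono x → StrictMono y →
    (∀ i, x i ∈ S) → (∀ i, y i ∈ T) →
      0 ≤ (Matrix.of fun i j => K (x i) (y j)).det

/-- One reduction step for the `min` kernel determinant. -/
lemma min_det_key (n : ℕ)
    (ih : ∀ a b : Fin n → ℝ, StrictMono a → StrictMono b → (∀ i, 0 ≤ a i) → (∀ i, 0 ≤ b i) →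
      0 ≤ (Matrix.of fun i j => min (a i) (b j)).det)
    (a b : Fin (n + 1) → ℝ) (ha : StrictMono a) (hb : StrictMono b)
    (ha0 : ∀ i, 0 ≤ a i) (hb0 : ∀ i, 0 ≤ b i) (hab : a 0 ≤ b 0) :
    0 ≤ (Matrix.of fun i j => min (a i) (b j)).det := by
  set M : Matrix (Fin (n+1)) (Fin (n+1)) ℝ := Matrix.of fun i j => min (a i) (b j) with hM
  set N : Matrix (Fin (n+1)) (Fin (n+1)) ℝ :=
    Matrix.of fun i j => if j = 0 then M i 0 else M i j - M i 0 with hN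
  set E : Matrix (Fin (n+1)) (Fin (n+1)) ℝ :=
    Matrix.of fun k j => if k = 0 then 1 else if k = j then 1 else 0 with hE
  have hME : M = N * E := by
    ext i j
    rw [Matrix.mul_apply]
    by_cases hj : j = 0
    · subst hj
      have : ∀ k : Fin (n+1), N i k * E k 0 = if k = 0 then M i 0 else 0 := by
        intro k
        by_cases hk : k = 0 <;> simp [hN, hE, hk]
      rw [Finset.sum_congr rfl fun k _ => this k, Finset.sum_ite_eq' Finset.univ 0]
      simp
    · have : ∀ k : Fin (n+1), N i k * E k j =
          (if k = 0 then M i 0 else 0) + (if k = j then M i j - M i 0 else 0) := by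
        intro k
        by_cases hk0 : k = 0
        · subst hk0; simp [hN, hE, Ne.symm hj]
        · by_cases hkj : k = j <;> simp [hN, hE, hk0, hkj, hj]
      rw [Finset.sum_congr rfl fun k _ => this k, Finset.sum_add_distrib,
        Finset.sum_ite_eq' Finset.univ 0, Finset.sum_ite_eq' Finset.univ j]
      simp
  have hdetE : E.det = 1 := by
    rw [Matrix.det_of_upperTriangular]
    · apply Finset.prod_eq_one
      intro k _
      by_cases hk : k = 0 <;> simp [hE, hk]
    · intro k j hjk
      have hk0 : k ≠ 0 := by
        intro h; subst h; exact absurd hjk (by simp)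
      have hkj : k ≠ j := (ne_of_gt hjk)
      simp [hE, hk0, hkj]
  have hdet : M.det = N.det := by rw [hME, Matrix.det_mul, hdetE, mul_one]
  rw [hdet, Matrix.det_succ_row_zero]
  have hrow0 : ∀ j : Fin (n+1), j ≠ 0 → N 0 j = 0 := by
    intro j hj
    have h1 : min (a 0) (b j) = a 0 := min_eq_left (hab.trans (hb.monotone (Fin.zero_le j)))
    have h2 : min (a 0) (b 0) = a 0 := min_eq_left hab
    simp [hN, hM, hj, h1, h2]
  rw [Finset.sum_eq_single 0]
  · have hN00 : N 0 0 = a 0 := by simp [hN, hM, min_eq_left hab]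
    simp only [Fin.val_zero, pow_zero, one_mul, hN00]
    apply mul_nonneg (ha0 0)
    -- the minor
    by_cases hcase : ∀ i : Fin n, b 0 < a i.succ
    · have hsub : (N.submatrix Fin.succ (Fin.succAbove 0)) =
          Matrix.of fun i j : Fin n => min (a i.succ - b 0) (b j.succ - b 0) := by
        ext i j
        have hj : (Fin.succAbove 0 j) = j.succ := rfl
        have hne : (j.succ : Fin (n+1)) ≠ 0 := Fin.succ_ne_zero j
        have hmin : min (a i.succ) (b 0) = b 0 := min_eq_right (le_of_lt (hcase i))
        simp only [Matrix.submatrix_apply, hj, hN, Matrix.of_apply, hne, if_neg hne, hM]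
        rw [hmin]
        rcases le_total (a i.succ) (b j.succ) with h | h
        · rw [min_eq_left h, min_eq_left (by linarith)]; simp
        · rw [min_eq_right h, min_eq_right (by linarith)]; simp
      rw [hsub]
      exact ih _ _ (fun i j hij => by
          have h := ha (show i.succ < j.succ from Fin.succ_lt_succ_iff.mpr hij)
          exact sub_lt_sub_right h _)
        (fun i j hij => by
          have h := hb (show i.succ < j.succ from Fin.succ_lt_succ_iff.mpr hij)
          exact sub_lt_sub_right h _)
        (fun i => le_of_lt (sub_pos.mpr (hcase i)))
        (fun j => by have : b 0 < b j.succ := hb (Fin.succ_pos j); linarith)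
    · push_neg at hcase
      obtain ⟨i, hi⟩ := hcase
      have : ∀ j, (N.submatrix Fin.succ (Fin.succAbove 0)) i j = 0 := by
        intro j
        have hne : (j.succ : Fin (n+1)) ≠ 0 := Fin.succ_ne_zero j
        have h1 : min (a i.succ) (b j.succ) = a i.succ :=
          min_eq_left (hi.trans (hb.monotone (Fin.zero_le j.succ)))
        have h2 : min (a i.succ) (b 0) = a i.succ := min_eq_left hi
        simp only [Matrix.submatrix_apply, hN, Matrix.of_apply, if_neg hne, hM]
        show min (a i.succ) (b (Fin.succAbove 0 j)) - min (a i.succ) (b 0) = 0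
        have : Fin.succAbove 0 j = j.succ := rfl
        rw [this, h1, h2, sub_self]
      rw [Matrix.det_eq_zero_of_row_eq_zero i this]
  · intro j _ hj
    rw [hrow0 j hj]
    ring
  · simp

/-- The `min` kernel is totally positive. -/
lemma min_det_nonneg : ∀ (n : ℕ) (a b : Fin n → ℝ), StrictMono a → StrictMono b →
    (∀ i, 0 ≤ a i) → (∀ i, 0 ≤ b i) →
    0 ≤ (Matrix.of fun i j => min (a i) (b j)).det := by
  intro n
  induction n with
  | zero => intro a b _ _ _ _; simp [Matrix.det_fin_zero]
  | succ n ih =>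
    intro a b ha hb ha0 hb0
    rcases le_total (a 0) (b 0) with hab | hab
    · exact min_det_key n ih a b ha hb ha0 hb0 hab
    · have := min_det_key n (fun a b ha hb ha0 hb0 => by
          have h := ih b a hb ha hb0 ha0
          rw [← Matrix.det_transpose] at h
          convert h using 2
          ext i j
          simp [min_comm, Matrix.transpose]) b a hb ha hb0 ha0 hab
      rw [← Matrix.det_transpose] at this
      convert this using 2
      ext i j
      simp [min_comm, Matrix.transpose]

theorem block_basu_density_tp_inf (l₀ l₁₂ : ℝ) (h₀ : 0 < l₀) (h₁₂ : 0 < l₁₂) :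
    TPinf (fun x y =>
        if y ≤ x then
          (2 * l₀ + l₁₂) * (l₀ + l₁₂) / 2 * Real.exp (-(l₀ + l₁₂) * x - l₀ * y)
        else
          (2 * l₀ + l₁₂) * (l₀ + l₁₂) / 2 * Real.exp (-l₀ * x - (l₀ + l₁₂) * y))
      (Ioi 0) (Ioi 0) := by
  intro s _ x y hx hy _ _
  set C : ℝ := (2 * l₀ + l₁₂) * (l₀ + l₁₂) / 2 with hC
  have hCpos : 0 < C := by positivity
  -- pointwise factorization
  have hpt : ∀ u v : ℝ,
      (if v ≤ u then C * Real.exp (-(l₀ + l₁₂) * u - l₀ * v)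
        else C * Real.exp (-l₀ * u - (l₀ + l₁₂) * v)) =
      (C * Real.exp (-l₀ * u)) *
        (Real.exp (-l₀ * v) * min (Real.exp (-l₁₂ * u)) (Real.exp (-l₁₂ * v))) := by
    intro u v
    by_cases h : v ≤ u
    · rw [if_pos h, min_eq_left (Real.exp_le_exp.mpr (by nlinarith)),
        mul_assoc, ← Real.exp_add, ← Real.exp_add]
      congr 1
      rw [Real.exp_eq_exp]
      ring
    · rw [if_neg h, min_eq_right (Real.exp_le_exp.mpr (by nlinarith [le_of_not_ge h])),
        mul_assoc, ← Real.exp_add, ← Real.exp_add]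
      congr 1
      rw [Real.exp_eq_exp]
      ring
  have hmat : (Matrix.of fun i j =>
      if y j ≤ x i then C * Real.exp (-(l₀ + l₁₂) * x i - l₀ * y j)
      else C * Real.exp (-l₀ * x i - (l₀ + l₁₂) * y j)) =
      Matrix.of fun i j => (C * Real.exp (-l₀ * x i)) *
        ((Matrix.of fun i j => Real.exp (-l₀ * y j) *
          min (Real.exp (-l₁₂ * x i)) (Real.exp (-l₁₂ * y j))) i j) := by
    ext i j
    exact hpt (x i) (y j)
  show 0 ≤ (Matrix.of fun i j =>
      if y j ≤ x i then C * Real.exp (-(l₀ + l₁₂) * x i - l₀ * y j)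
      else C * Real.exp (-l₀ * x i - (l₀ + l₁₂) * y j)).det
  rw [hmat, Matrix.det_mul_column]
  have hB : (Matrix.of fun i j : Fin s => Real.exp (-l₀ * y j) *
      ((Matrix.of fun i j => min (Real.exp (-l₁₂ * x i)) (Real.exp (-l₁₂ * y j))) i j)) =
      Matrix.of fun i j : Fin s => (fun j => Real.exp (-l₀ * y j)) j *
      ((Matrix.of fun i j => min (Real.exp (-l₁₂ * x i)) (Real.exp (-l₁₂ * y j))) i j) := rfl
  rw [show (Matrix.of fun i j : Fin s => Real.exp (-l₀ * y j) *
      min (Real.exp (-l₁₂ * x i)) (Real.exp (-l₁₂ * y j))) =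
      Matrix.of fun i j : Fin s => (fun j => Real.exp (-l₀ * y j)) j *
      ((Matrix.of fun i j => min (Real.exp (-l₁₂ * x i)) (Real.exp (-l₁₂ * y j))) i j) from rfl,
    Matrix.det_mul_row]
  apply mul_nonneg (Finset.prod_nonneg fun i _ => by positivity)
  apply mul_nonneg (Finset.prod_nonneg fun i _ => by positivity)
  -- the min matrix: reverse the indices
  set B : Matrix (Fin s) (Fin s) ℝ :=
    Matrix.of fun i j => min (Real.exp (-l₁₂ * x i)) (Real.exp (-l₁₂ * y j)) with hBdef
  have hrev : (B.submatrix ⇑(Fin.revPerm : Equiv.Perm (Fin s)) ⇑(Fin.revPerm : Equiv.Perm (Fin s))) =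
      Matrix.of fun i j => min ((fun i => Real.exp (-l₁₂ * x (Fin.rev i))) i)
        ((fun j => Real.exp (-l₁₂ * y (Fin.rev j))) j) := by
    ext i j; rfl
  have := Matrix.det_submatrix_equiv_self (Fin.revPerm : Equiv.Perm (Fin s)) B
  rw [hrev] at this
  rw [← this]
  apply min_det_nonneg
  · intro i j hij
    exact Real.exp_lt_exp.mpr (by nlinarith [hx (Fin.rev_lt_rev.mpr hij)])
  · intro i j hij
    exact Real.exp_lt_exp.mpr (by nlinarith [hy (Fin.rev_lt_rev.mpr hij)])
  · intro i; positivity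
  · intro i; positivity
end
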